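/- In the setting where S(u) ∈ Mat_{2n}(𝒜) satisfies the reflection equation with shift ρ and blocks [[A(u), B(u)], [C(u), D(u)]], the blocks satisfy the AB exchange relation: A₂(v) B₁(u) = R₁₂(u−v) B₁(u) R^t₁₂(−u−v−ρ) A₂(v) + (u−v)⁻¹ P₁₂ B₁(v) R^t₁₂(−u−v−ρ) A₂(u) ∓ (u+v+ρ)⁻¹ B₂(v) Q₁₂ D₁(u), for all admissible u, v (u ≠ v, u+v+ρ ≠ 0), where on ℂⁿ ⊗ ℂⁿ: R(u) = I − u⁻¹P, R^t(u) = I − u⁻¹Q, Q = Σ_{i,j} e_{ij} ⊗ e_{j̄ ī} (orthogonal type, ī = n−i+1), and ∓ is − in the orthogonal case and + in the symplectic case. -/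
import Mathlib


noncomputable section

open Matrix

/-- The permutation operator `P` on `ℂ^N ⊗ ℂ^N`. -/
def permP (N : ℕ) : Matrix (Fin N × Fin N) (Fin N × Fin N) ℂ :=
  fun x y => if x.1 = y.2 ∧ x.2 = y.1 then 1 else 0

/-- The operator `Q = Σ θ_{ij} e_{ij} ⊗ e_{ī j̄}`, `ī = N − i + 1` being `Fin.rev`. -/
def Qop (N : ℕ) (θ : Fin N → ℂ) : Matrix (Fin N × Fin N) (Fin N × Fin N) ℂ :=
  fun x y => if x.2 = Fin.rev x.1 ∧ y.2 = Fin.rev y.1 then θ x.1 * θ y.1 else 0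

/-- The Yang R-matrix `R(u) = I − u⁻¹P` with entries mapped into an algebra `A`. -/
def yangRA (N : ℕ) (A : Type*) [Ring A] [Algebra ℂ A] (u : ℂ) :
    Matrix (Fin N × Fin N) (Fin N × Fin N) A :=
  ((1 : Matrix _ _ ℂ) - u⁻¹ • permP N).map (algebraMap ℂ A)

/-- `R^t(u) = I − u⁻¹Q` with entries mapped into an algebra `A`. -/
def yangRtA (N : ℕ) (θ : Fin N → ℂ) (A : Type*) [Ring A] [Algebra ℂ A] (u : ℂ) :
    Matrix (Fin N × Fin N) (Fin N × Fin N) A :=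
  ((1 : Matrix _ _ ℂ) - u⁻¹ • Qop N θ).map (algebraMap ℂ A)

/-- `P₁₂` with entries mapped into an algebra `A`. -/
def permPA (N : ℕ) (A : Type*) [Ring A] [Algebra ℂ A] :
    Matrix (Fin N × Fin N) (Fin N × Fin N) A :=
  (permP N).map (algebraMap ℂ A)

/-- `Q₁₂` with entries mapped into an algebra `A`. -/
def QopA (N : ℕ) (θ : Fin N → ℂ) (A : Type*) [Ring A] [Algebra ℂ A] :
    Matrix (Fin N × Fin N) (Fin N × Fin N) A :=
  (Qop N θ).map (algebraMap ℂ A)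

/-- `X₁ = X ⊗ I`. -/
def op1 {N : ℕ} {A : Type*} [Ring A] (X : Matrix (Fin N) (Fin N) A) :
    Matrix (Fin N × Fin N) (Fin N × Fin N) A :=
  fun x y => if x.2 = y.2 then X x.1 y.1 else 0

/-- `X₂ = I ⊗ X`. -/
def op2 {N : ℕ} {A : Type*} [Ring A] (X : Matrix (Fin N) (Fin N) A) :
    Matrix (Fin N × Fin N) (Fin N × Fin N) A :=
  fun x y => if x.1 = y.1 then X x.2 y.2 else 0

/-- Embedding `Fin n → Fin (2n)`, `i ↦ i`. -/
def lo (n : ℕ) (i : Fin n) : Fin (2 * n) := ⟨i.1, by have := i.2; omega⟩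

/-- Embedding `Fin n → Fin (2n)`, `i ↦ n + i`. -/
def hi (n : ℕ) (i : Fin n) : Fin (2 * n) := ⟨n + i.1, by have := i.2; omega⟩

/-- The upper-left block `A(u)`. -/
def blockA {n : ℕ} {A : Type*} (X : Matrix (Fin (2 * n)) (Fin (2 * n)) A) :
    Matrix (Fin n) (Fin n) A := fun i j => X (lo n i) (lo n j)

/-- The upper-right block `B(u)`. -/
def blockB {n : ℕ} {A : Type*} (X : Matrix (Fin (2 * n)) (Fin (2 * n)) A) :
    Matrix (Fin n) (Fin n) A := fun i j => X (lo n i) (hi n j)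

/-- The lower-right block `D(u)`. -/
def blockD {n : ℕ} {A : Type*} (X : Matrix (Fin (2 * n)) (Fin (2 * n)) A) :
    Matrix (Fin n) (Fin n) A := fun i j => X (hi n i) (hi n j)

/-- The orthogonal-type signs on `ℂⁿ` (all equal to `1`). -/
def orthTheta (n : ℕ) : Fin n → ℂ := fun _ => 1


section AuxLemmas

set_option linter.unusedSectionVars false

variable {N : ℕ} {A : Type*} [Ring A] [Algebra ℂ A] {θ : Fin N → ℂ}

lemma eq_rev_comm (a c : Fin N) : (a = Fin.rev c) = (c = Fin.rev a) :=
  propext ⟨fun h => by rw [h, Fin.rev_rev], fun h => by rw [h, Fin.rev_rev]⟩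

lemma rev_eq_comm (c a : Fin N) : (Fin.rev c = a) = (c = Fin.rev a) :=
  propext ⟨fun h => by rw [← h, Fin.rev_rev], fun h => by rw [h, Fin.rev_rev]⟩

lemma op1_mul_op2_apply (X Y : Matrix (Fin N) (Fin N) A) (x y : Fin N × Fin N) :
    (op1 X * op2 Y) x y = X x.1 y.1 * Y x.2 y.2 := by
  rw [Matrix.mul_apply, Fintype.sum_prod_type]
  simp [op1, op2, mul_ite, ite_mul, Finset.sum_ite_eq, Finset.sum_ite_eq']

lemma op2_mul_op1_apply (X Y : Matrix (Fin N) (Fin N) A) (x y : Fin N × Fin N) :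
    (op2 Y * op1 X) x y = Y x.2 y.2 * X x.1 y.1 := by
  rw [Matrix.mul_apply, Fintype.sum_prod_type]
  simp [op1, op2, mul_ite, ite_mul, Finset.sum_ite_eq, Finset.sum_ite_eq']

lemma permPA_mul_apply (M : Matrix (Fin N × Fin N) (Fin N × Fin N) A) (x y : Fin N × Fin N) :
    (permPA N A * M) x y = M (x.2, x.1) y := by
  rw [Matrix.mul_apply, Fintype.sum_prod_type]
  simp [permPA, permP, Matrix.map_apply, apply_ite, ite_and, mul_ite, ite_mul,
    Finset.sum_ite_eq, Finset.sum_ite_eq']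

lemma mul_permPA_apply (M : Matrix (Fin N × Fin N) (Fin N × Fin N) A) (x y : Fin N × Fin N) :
    (M * permPA N A) x y = M x (y.2, y.1) := by
  rw [Matrix.mul_apply, Fintype.sum_prod_type]
  simp [permPA, permP, Matrix.map_apply, apply_ite, ite_and, mul_ite, ite_mul,
    Finset.sum_ite_eq, Finset.sum_ite_eq']

lemma op1_mul_QopA_apply (X : Matrix (Fin N) (Fin N) A) (x z : Fin N × Fin N) :
    (op1 X * QopA N θ A) x z =
      if z.2 = Fin.rev z.1 then (θ (Fin.rev x.2) * θ z.1) • X x.1 (Fin.rev x.2) else 0 := by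
  rw [Matrix.mul_apply, Fintype.sum_prod_type]
  by_cases hz : z.2 = Fin.rev z.1 <;>
    simp only [op1, QopA, Qop, Matrix.map_apply, hz, and_true, and_false, if_false,
      apply_ite (algebraMap ℂ A), _root_.map_zero, ite_mul, zero_mul, mul_ite, mul_zero,
      Finset.sum_ite_eq, Finset.mem_univ, if_true, Finset.sum_const_zero]
  · simp only [eq_rev_comm x.2, Finset.sum_ite_eq', Finset.mem_univ, if_true,
      Algebra.smul_def]
    rw [← Algebra.commutes]

lemma op2_mul_QopA_apply (Y : Matrix (Fin N) (Fin N) A) (x z : Fin N × Fin N) :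
    (op2 Y * QopA N θ A) x z =
      if z.2 = Fin.rev z.1 then (θ x.1 * θ z.1) • Y x.2 (Fin.rev x.1) else 0 := by
  rw [Matrix.mul_apply, Fintype.sum_prod_type]
  by_cases hz : z.2 = Fin.rev z.1 <;>
    simp only [op2, QopA, Qop, Matrix.map_apply, hz, and_true, and_false, if_false,
      apply_ite (algebraMap ℂ A), _root_.map_zero, ite_mul, zero_mul, mul_ite, mul_zero,
      Finset.sum_ite_eq', Finset.sum_ite_eq, Finset.mem_univ, if_true, Finset.sum_const_zero]
  · simp only [Algebra.smul_def]
    rw [← Algebra.commutes]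

lemma sandwich1_apply (X Y : Matrix (Fin N) (Fin N) A) (x y : Fin N × Fin N) :
    (op1 X * QopA N θ A * op2 Y) x y =
      (θ (Fin.rev x.2) * θ y.1) • (X x.1 (Fin.rev x.2) * Y (Fin.rev y.1) y.2) := by
  rw [Matrix.mul_apply, Fintype.sum_prod_type]
  simp only [op1_mul_QopA_apply, op2, ite_mul, zero_mul, Finset.sum_ite_eq',
    Finset.mem_univ, if_true]
  simp only [mul_ite, mul_zero, Finset.sum_ite_eq', Finset.mem_univ, if_true,
    smul_mul_assoc]

lemma sandwich2_apply (X Y : Matrix (Fin N) (Fin N) A) (x y : Fin N × Fin N) :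
    (op2 Y * QopA N θ A * op1 X) x y =
      (θ x.1 * θ (Fin.rev y.2)) • (Y x.2 (Fin.rev x.1) * X (Fin.rev y.2) y.1) := by
  rw [Matrix.mul_apply, Fintype.sum_prod_type]
  simp only [op2_mul_QopA_apply, op1, ite_mul, zero_mul, Finset.sum_ite_eq',
    Finset.mem_univ, if_true]
  simp only [mul_ite, mul_zero, rev_eq_comm, eq_rev_comm y.2, Finset.sum_ite_eq',
    Finset.mem_univ, if_true, smul_mul_assoc]

lemma yangRA_eq (w : ℂ) : yangRA N A w = 1 - w⁻¹ • permPA N A := by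
  ext x y
  simp only [yangRA, permPA, Matrix.map_apply, Matrix.sub_apply, Matrix.smul_apply,
    Matrix.one_apply, _root_.map_sub, smul_eq_mul, _root_.map_mul,
    apply_ite (algebraMap ℂ A), _root_.map_one, _root_.map_zero]
  rw [Algebra.smul_def]

lemma yangRtA_eq (w : ℂ) : yangRtA N θ A w = 1 - w⁻¹ • QopA N θ A := by
  ext x y
  simp only [yangRtA, QopA, Matrix.map_apply, Matrix.sub_apply, Matrix.smul_apply,
    Matrix.one_apply, _root_.map_sub, smul_eq_mul, _root_.map_mul,
    apply_ite (algebraMap ℂ A), _root_.map_one, _root_.map_zero]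
  rw [Algebra.smul_def]

lemma expandL (a b : ℂ) (P Q M Nt : Matrix (Fin N × Fin N) (Fin N × Fin N) A) :
    (1 - a • P) * M * (1 - b • Q) * Nt
      = M * Nt - b • (M * Q * Nt) - a • (P * (M * Nt)) + (a * b) • (P * (M * Q * Nt)) := by
  simp only [sub_mul, mul_sub, one_mul, mul_one, smul_mul_assoc, mul_smul_comm,
    smul_smul, smul_sub, mul_assoc]
  module

lemma expandR (a b : ℂ) (P Q M Nt : Matrix (Fin N × Fin N) (Fin N × Fin N) A) :
    Nt * (1 - b • Q) * M * (1 - a • P)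
      = Nt * M - b • (Nt * Q * M) - a • (Nt * M * P) + (a * b) • (Nt * Q * M * P) := by
  simp only [sub_mul, mul_sub, one_mul, mul_one, smul_mul_assoc, mul_smul_comm,
    smul_smul, smul_sub, mul_assoc]
  module

lemma expandP (b : ℂ) (P Q M Nt : Matrix (Fin N × Fin N) (Fin N × Fin N) A) :
    P * M * (1 - b • Q) * Nt = P * (M * Nt) - b • (P * (M * Q * Nt)) := by
  simp only [sub_mul, mul_sub, one_mul, mul_one, smul_mul_assoc, mul_smul_comm,
    smul_smul, smul_sub, mul_assoc]

end AuxLemmas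

section FinLemmas

lemma rev_lo (n : ℕ) (i : Fin n) : Fin.rev (lo n i) = hi n (Fin.rev i) := by
  ext
  simp only [Fin.val_rev, lo, hi]
  omega

lemma rev_hi (n : ℕ) (j : Fin n) : Fin.rev (hi n j) = lo n (Fin.rev j) := by
  ext
  simp only [Fin.val_rev, lo, hi]
  omega

end FinLemmas

/-- the AB exchange relation for the blocks of a solution `S(u)` of the
reflection equation with shift `ρ`:
`A₂(v) B₁(u) = R₁₂(u−v) B₁(u) R^t₁₂(−u−v−ρ) A₂(v)
  + (u−v)⁻¹ P₁₂ B₁(v) R^t₁₂(−u−v−ρ) A₂(u) ∓ (u+v+ρ)⁻¹ B₂(v) Q₁₂ D₁(u)`,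
where `ε = +1` (orthogonal, sign `−`) or `ε = −1` (symplectic, sign `+`), and the
`n×n` operators `P`, `Q`, `R^t` are of orthogonal type. -/
theorem block_AB_relation (n : ℕ) (ρ : ℂ) (θ : Fin (2 * n) → ℂ) (ε : ℂ)
    (hcase : ((∀ i, θ i = 1) ∧ ε = 1) ∨
      ((∀ i : Fin (2 * n), θ i = if (i : ℕ) < n then -1 else 1) ∧ ε = -1))
    (A : Type*) [Ring A] [Algebra ℂ A]
    (S : ℂ → Matrix (Fin (2 * n)) (Fin (2 * n)) A)
    (D : Set ℂ) (hD : Dᶜ.Finite)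
    (hRE : ∀ u ∈ D, ∀ v ∈ D, u ≠ v → u + v + ρ ≠ 0 →
      yangRA (2 * n) A (u - v) * op1 (S u) * yangRtA (2 * n) θ A (-u - v - ρ) * op2 (S v) =
        op2 (S v) * yangRtA (2 * n) θ A (-u - v - ρ) * op1 (S u)
          * yangRA (2 * n) A (u - v)) :
    ∀ u ∈ D, ∀ v ∈ D, u ≠ v → u + v + ρ ≠ 0 →
      op2 (blockA (S v)) * op1 (blockB (S u)) =
        yangRA n A (u - v) * op1 (blockB (S u)) * yangRtA n (orthTheta n) A (-u - v - ρ)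
            * op2 (blockA (S v))
          + (u - v)⁻¹ • (permPA n A * op1 (blockB (S v))
              * yangRtA n (orthTheta n) A (-u - v - ρ) * op2 (blockA (S u)))
          + (-ε * (u + v + ρ)⁻¹) • (op2 (blockB (S v)) * QopA n (orthTheta n) A
              * op1 (blockD (S u))) := by
  intro u hu v hv huv hsum
  have hθhi : ∀ i : Fin n, θ (hi n i) = 1 := by
    rcases hcase with ⟨hθ, _⟩ | ⟨hθ, _⟩ <;> intro i <;> simp [hθ, hi]
  have hθlo : ∀ i : Fin n, θ (lo n i) = ε := by
    rcases hcase with ⟨hθ, hε⟩ | ⟨hθ, hε⟩ <;> intro i <;> simp [hθ, hε, lo, i.isLt]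
  have hε2 : ε * ε = 1 := by
    rcases hcase with ⟨_, hε⟩ | ⟨_, hε⟩ <;> rw [hε] <;> norm_num
  have hb : (-u - v - ρ)⁻¹ = -(u + v + ρ)⁻¹ := by
    rw [show -u - v - ρ = -(u + v + ρ) by ring, inv_neg]
  have hre := hRE u hu v hv huv hsum
  rw [yangRA_eq, yangRtA_eq, hb, expandL, expandR] at hre
  rw [yangRA_eq, yangRtA_eq, hb, expandL, expandP]
  ext ⟨i, k⟩ ⟨j, l⟩
  have h := Matrix.ext_iff.mpr hre (lo n i, lo n k) (hi n j, lo n l)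
  simp only [Matrix.add_apply, Matrix.sub_apply, Matrix.smul_apply,
    op1_mul_op2_apply, op2_mul_op1_apply, permPA_mul_apply, mul_permPA_apply,
    sandwich1_apply, sandwich2_apply, rev_lo, rev_hi, hθhi, hθlo, hε2,
    one_mul, mul_one, one_smul] at h
  simp only [Matrix.add_apply, Matrix.sub_apply, Matrix.smul_apply,
    op1_mul_op2_apply, op2_mul_op1_apply, permPA_mul_apply, mul_permPA_apply,
    sandwich1_apply, sandwich2_apply, orthTheta, blockA, blockB, blockD,
    one_mul, mul_one, one_smul]
  rw [h]
  module
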